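/- Let k ∈ [0,1), let k* be the dual modulus with (k*)² = −k²/(1−k²), and let θ̄ ∈ (0,π/2). Then sc(θ̄·2K(k*)/π | k*) = √(1−k²) · sc(θ̄·2K(k)/π | k); equivalently, the quantity (1−k²)^{1/4}·sc(θ̄·2K(k)/π | k) is invariant under replacing k by k*. (This is the self-duality of the conductances ρ(θ̄|k) = sc(θ̄·2K(k)/π|k) of the Z-invariant massive Laplacian, the key identity behind the relation √(k*')·Δ^{m(k*)} = √(k')·Δ^{m(k)} showing that the massive harmonic functions for the dual moduli k and k* coincide.) -/

import Mathlib

/-!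
The substitution `tan ψ = √(1 - k²) tan φ` turns `(1 - k*² sin² ψ)^{-1/2} dψ` into
`√(1 - k²) (1 - k² sin² φ)^{-1/2} dφ`. Hence the amplitudes are related by
`tan am(√(1 - k²) u | k*) = √(1 - k²) tan am(u | k)` for `|u| < K(k)`, and letting `φ → π/2`
gives `K(k*) = √(1 - k²) K(k)`. So the argument `θ̄·2K(k*)/π` is `√(1 - k²)` times
`θ̄·2K(k)/π`, and `sc = tan ∘ am` finishes the proof.
-/

open Real Filter

/-- Complete elliptic integral of the first kind `K`, as a function of the
squared modulus `m = k²`. -/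
noncomputable def ellK (m : ℝ) : ℝ :=
  ∫ τ in (0:ℝ)..(π/2), 1 / Real.sqrt (1 - m * Real.sin τ ^ 2)

/-- The incomplete elliptic integral of the first kind
`φ ↦ ∫₀^φ (1 - k² sin² t)^{-1/2} dt`, as a function of the squared modulus `m = k²`. -/
noncomputable def amF (m φ : ℝ) : ℝ :=
  ∫ t in (0:ℝ)..φ, 1 / Real.sqrt (1 - m * Real.sin t ^ 2)

/-- Jacobi's amplitude, the inverse of `amF m`, squared modulus `m = k²`. -/
noncomputable def am (m u : ℝ) : ℝ := Function.invFun (amF m) u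

/-- Jacobi elliptic function `sn`, squared modulus `m = k²`. -/
noncomputable def sn (u m : ℝ) : ℝ := Real.sin (am m u)

/-- Jacobi elliptic function `cn`, squared modulus `m = k²`. -/
noncomputable def cn (u m : ℝ) : ℝ := Real.cos (am m u)

/-- Jacobi elliptic function `dn`, squared modulus `m = k²`. -/
noncomputable def dn (u m : ℝ) : ℝ := Real.sqrt (1 - m * sn u m ^ 2)

/-- Jacobi elliptic function `sc = sn/cn`, squared modulus `m = k²`. -/
noncomputable def sc (u m : ℝ) : ℝ := sn u m / cn u m

open Topology Set

lemma one_sub_mul_sin_sq_pos {m : ℝ} (hm : m < 1) (t : ℝ) : 0 < 1 - m * sin t ^ 2 := by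
  rcases le_or_gt m 0 with h | h
  · nlinarith [sq_nonneg (sin t)]
  · nlinarith [sin_sq_le_one t]

lemma continuous_inv_sqrt_one_sub_mul_sin_sq {m : ℝ} (hm : m < 1) :
    Continuous fun t : ℝ => 1 / √(1 - m * sin t ^ 2) :=
  continuous_const.div (by fun_prop) fun t => (sqrt_pos.2 (one_sub_mul_sin_sq_pos hm t)).ne'

lemma dual_modulus_lt_one {m : ℝ} (hm : m < 1) : -m / (1 - m) < 1 := by
  rw [div_lt_one (by linarith)]
  linarith

lemma amF_hasDerivAt {m : ℝ} (hm : m < 1) (φ : ℝ) :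
    HasDerivAt (amF m) (1 / √(1 - m * sin φ ^ 2)) φ :=
  ((continuous_inv_sqrt_one_sub_mul_sin_sq hm).integral_hasStrictDerivAt 0 φ).hasDerivAt

lemma amF_continuous {m : ℝ} (hm : m < 1) : Continuous (amF m) :=
  continuous_iff_continuousAt.2 fun φ => (amF_hasDerivAt hm φ).continuousAt

lemma amF_strictMono {m : ℝ} (hm : m < 1) : StrictMono (amF m) :=
  strictMono_of_hasDerivAt_pos (amF_hasDerivAt hm) fun φ =>
    one_div_pos.2 (sqrt_pos.2 (one_sub_mul_sin_sq_pos hm φ))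

lemma amF_zero (m : ℝ) : amF m 0 = 0 := intervalIntegral.integral_same

lemma amF_neg (m φ : ℝ) : amF m (-φ) = -amF m φ := by
  have h := intervalIntegral.integral_comp_neg (a := 0) (b := φ)
    (fun t => 1 / √(1 - m * sin t ^ 2))
  simp only [sin_neg, neg_sq, neg_zero] at h
  rw [amF, amF, h, intervalIntegral.integral_symm]

lemma amF_pi_div_two (m : ℝ) : amF m (π / 2) = ellK m := rfl

lemma am_amF {m : ℝ} (hm : m < 1) (φ : ℝ) : am m (amF m φ) = φ :=
  Function.leftInverse_invFun (amF_strictMono hm).injective φ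

lemma exists_amF_eq {m : ℝ} (hm : m < 1) {u : ℝ} (hu : u ∈ Ioo (-ellK m) (ellK m)) :
    ∃ φ ∈ Ioo (-(π / 2)) (π / 2), amF m φ = u := by
  rw [← amF_pi_div_two, ← amF_neg] at hu
  exact intermediate_value_Ioo (by linarith [pi_pos]) (amF_continuous hm).continuousOn hu

lemma one_add_sq_sqrt_mul_tan {m x : ℝ} (hm : m < 1) (hx : cos x ≠ 0) :
    1 + (√(1 - m) * tan x) ^ 2 = (1 - m * sin x ^ 2) / cos x ^ 2 := by
  rw [tan_eq_sin_div_cos, mul_pow, sq_sqrt (by linarith)]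
  field_simp
  linear_combination sin_sq_add_cos_sq x

lemma one_sub_dual_mul_sin_arctan_mul_tan_sq {m x : ℝ} (hm : m < 1) (hx : cos x ≠ 0) :
    1 - -m / (1 - m) * sin (arctan (√(1 - m) * tan x)) ^ 2 = (1 - m * sin x ^ 2)⁻¹ := by
  have hD := one_sub_mul_sin_sq_pos hm x
  have h1m : 1 - m ≠ 0 := by linarith
  rw [sin_arctan, div_pow, sq_sqrt (by positivity), one_add_sq_sqrt_mul_tan hm hx, mul_pow,
    sq_sqrt (by linarith), tan_eq_sin_div_cos]
  field_simp
  ring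

lemma hasDerivAt_arctan_mul_tan {m x : ℝ} (hm : m < 1) (hx : cos x ≠ 0) :
    HasDerivAt (fun t => arctan (√(1 - m) * tan t)) (√(1 - m) / (1 - m * sin x ^ 2)) x := by
  refine ((hasDerivAt_arctan _).comp x ((hasDerivAt_tan hx).const_mul _)).congr_deriv ?_
  rw [one_add_sq_sqrt_mul_tan hm hx]
  field_simp

lemma amF_dual {m φ : ℝ} (hm : m < 1) (hφ : φ ∈ Ioo (-(π / 2)) (π / 2)) :
    amF (-m / (1 - m)) (arctan (√(1 - m) * tan φ)) = √(1 - m) * amF m φ := by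
  have hcos : ∀ x ∈ uIcc 0 φ, cos x ≠ 0 := fun x hx =>
    (cos_pos_of_mem_Ioo <|
      ordConnected_Ioo.uIcc_subset ⟨by linarith [pi_pos], by linarith [pi_pos]⟩ hφ hx).ne'
  have hsubst := intervalIntegral.integral_deriv_smul_comp
    (fun x hx => hasDerivAt_arctan_mul_tan hm (hcos x hx))
    ((continuousOn_const.div (by fun_prop)) fun x _ => (one_sub_mul_sin_sq_pos hm x).ne')
    (continuous_inv_sqrt_one_sub_mul_sin_sq (dual_modulus_lt_one hm))
  rw [tan_zero, mul_zero, arctan_zero] at hsubst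
  rw [amF, ← hsubst, amF, ← intervalIntegral.integral_const_mul]
  refine intervalIntegral.integral_congr fun x hx => ?_
  have hD := one_sub_mul_sin_sq_pos hm x
  simp only [Function.comp_apply, smul_eq_mul]
  rw [one_sub_dual_mul_sin_arctan_mul_tan_sq hm (hcos x hx), sqrt_inv]
  field_simp
  rw [sq_sqrt hD.le]

lemma ellK_dual {m : ℝ} (hm : m < 1) : ellK (-m / (1 - m)) = √(1 - m) * ellK m := by
  have harctan : Tendsto (fun φ => arctan (√(1 - m) * tan φ)) (𝓝[<] (π / 2)) (𝓝 (π / 2)) :=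
    (tendsto_arctan_atTop.mono_right nhdsWithin_le_nhds).comp
      (tendsto_tan_pi_div_two.const_mul_atTop (sqrt_pos.2 (by linarith)))
  have hdual : amF (-m / (1 - m)) ∘ (fun φ => arctan (√(1 - m) * tan φ))
      =ᶠ[𝓝[<] (π / 2)] fun φ => √(1 - m) * amF m φ := by
    filter_upwards [Ioo_mem_nhdsLT (by linarith [pi_pos] : -(π / 2) < π / 2)] with φ hφ
    exact amF_dual hm hφ
  refine tendsto_nhds_unique
    (((amF_continuous (dual_modulus_lt_one hm)).tendsto _).comp harctan |>.congr' hdual) ?_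
  exact (((amF_continuous hm).tendsto _).mono_left nhdsWithin_le_nhds).const_mul _

lemma sc_dual {m u : ℝ} (hm : m < 1) (hu : u ∈ Ioo (-ellK m) (ellK m)) :
    sc (√(1 - m) * u) (-m / (1 - m)) = √(1 - m) * sc u m := by
  obtain ⟨φ, hφ, rfl⟩ := exists_amF_eq hm hu
  rw [sc, sc, sn, sn, cn, cn, ← tan_eq_sin_div_cos, ← tan_eq_sin_div_cos, ← amF_dual hm hφ,
    am_amF (dual_modulus_lt_one hm), am_amF hm, tan_arctan]

/-- Self-duality of the conductances of the Z-invariant massive Laplacian: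
for `k ∈ [0,1)`, dual squared modulus `(k*)² = -k²/(1-k²)` and `θ̄ ∈ (0,π/2)`,
`sc(θ̄·2K(k*)/π | k*) = √(1-k²) · sc(θ̄·2K(k)/π | k)`. -/
theorem conductance_self_duality (k θbar : ℝ)
    (hk : k ∈ Set.Ico (0 : ℝ) 1) (hθ : θbar ∈ Set.Ioo 0 (π / 2)) :
    sc (θbar * (2 * ellK (-k ^ 2 / (1 - k ^ 2))) / π) (-k ^ 2 / (1 - k ^ 2))
      = Real.sqrt (1 - k ^ 2) * sc (θbar * (2 * ellK (k ^ 2)) / π) (k ^ 2) := by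
  obtain ⟨hθ0, hθπ⟩ := hθ
  have hm : k ^ 2 < 1 := pow_lt_one₀ hk.1 hk.2 two_ne_zero
  have hK : 0 < ellK (k ^ 2) := by
    rw [← amF_pi_div_two, ← amF_zero]
    exact amF_strictMono hm (by positivity)
  have hu : θbar * (2 * ellK (k ^ 2)) / π ∈ Ioo (-ellK (k ^ 2)) (ellK (k ^ 2)) :=
    ⟨(neg_neg_of_pos hK).trans (by positivity), by rw [div_lt_iff₀ pi_pos]; nlinarith⟩
  rw [ellK_dual hm, ← sc_dual hm hu]
  congr 1
  ring
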